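/- arXiv:0707.1515 — 2 statements merged into one kernel-verified Lean document; each statement's English description precedes it below -/
import Mathlib

section
/- Let f(u,v) = Σ_{i=0}^{m} Σ_{j=0}^{n} c_{ij} Z_{i,m}(u) Z_{j,n}(v) with coefficients c_{ij} ∈ ℝ², and let P₁ be the convex hull of the set {c_{ij} : 0 ≤ i ≤ m, 0 ≤ j ≤ n}. Then for every y ∈ P₁, ‖y‖ ≤ ξ_B(m) · ξ_B(n) · max_{0 ≤ u,v ≤ 1} ‖f(u,v)‖. -/
open Finset

/-- The Bernstein basis polynomial `Z_{k,n}(t) = C(n,k) (1-t)^{n-k} t^k` as a real function. -/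
noncomputable def Z (n k : ℕ) (t : ℝ) : ℝ := (n.choose k : ℝ) * (1 - t) ^ (n - k) * t ^ k

/-- `ξ_B(n) = ∑_{i=0}^n ∏_{j=0,…,n; j ≠ i} max(|n-j|,|j|)/|i-j|`. -/
noncomputable def xiB (n : ℕ) : ℝ :=
  ∑ i ∈ Finset.range (n + 1), ∏ j ∈ (Finset.range (n + 1)).erase i,
    max |(n : ℝ) - (j : ℝ)| |(j : ℝ)| / |(i : ℝ) - (j : ℝ)|

/-! A polynomial of degree at most `n` is its own Lagrange interpolant at the nodes `j / n`.
Each factor `n t - l` of a Lagrange basis polynomial equals `(n - l) t - l (1 - t)`, so expanding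
the product shows that its coefficient on `t^k (1 - t)^(n - k)` is at most
`C(n,k) ∏_{l ≠ j} max(|n - l|, |l|) / |j - l|` in absolute value. Since Bernstein coefficients are
unique, every Bernstein coefficient of a polynomial bounded by `M` on `[0, 1]` is at most
`ξ_B(n) M`. Applying this first in `u` and then in `v` bounds each coordinate of each `c i j` by
`ξ_B(m) ξ_B(n) M`, and the sup-norm ball of that radius is convex. -/

open Polynomial

section Expansion

variable {ι R : Type*} [DecidableEq ι]

def mixedProdCoeff [CommSemiring R] (t : Finset ι) (a b : ι → R) (k : ℕ) : R :=
  ∑ S ∈ t.powersetCard k, (∏ l ∈ S, a l) * ∏ l ∈ t \ S, b l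

theorem prod_mul_add_mul_eq_sum [CommSemiring R] (t : Finset ι) (a b : ι → R) (x y : R) :
    ∏ l ∈ t, (a l * x + b l * y) =
      ∑ k ∈ range (t.card + 1), mixedProdCoeff t a b k * x ^ k * y ^ (t.card - k) := by
  rw [prod_add, sum_powerset]
  refine sum_congr rfl fun k _ => ?_
  rw [mixedProdCoeff, sum_mul, sum_mul]
  refine sum_congr rfl fun S hS => ?_
  obtain ⟨hSt, rfl⟩ := mem_powersetCard.mp hS
  rw [prod_mul_distrib, prod_mul_distrib, prod_const, prod_const, card_sdiff_of_subset hSt]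
  ring

theorem map_mixedProdCoeff {S : Type*} [CommSemiring R] [CommSemiring S] (f : R →+* S)
    (t : Finset ι) (a b : ι → R) (k : ℕ) :
    f (mixedProdCoeff t a b k) = mixedProdCoeff t (f ∘ a) (f ∘ b) k := by
  simp [mixedProdCoeff, map_sum, map_mul, map_prod]

theorem abs_mixedProdCoeff_le [CommRing R] [LinearOrder R] [IsStrictOrderedRing R]
    (t : Finset ι) (a b : ι → R) (k : ℕ) :
    |mixedProdCoeff t a b k| ≤ t.card.choose k * ∏ l ∈ t, max |a l| |b l| := by
  rw [mixedProdCoeff, ← card_powersetCard, ← nsmul_eq_mul]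
  refine (abs_sum_le_sum_abs _ _).trans (sum_le_card_nsmul _ _ _ fun S hS => ?_)
  rw [← prod_sdiff (mem_powersetCard.mp hS).1, abs_mul, abs_prod, abs_prod, mul_comm]
  gcongr with l _ l _
  · exact le_max_right _ _
  · exact le_max_left _ _

end Expansion

section ScaledBernstein

variable {R : Type*} [CommRing R]

/-- Since `Z n k t = C(n,k) t^k (1-t)^(n-k)`, the coefficient `a k` is `C(n,k)` times the
Bernstein coefficient. -/
noncomputable def scaledBernsteinSum (n : ℕ) (a : ℕ → R) : R[X] :=
  ∑ k ∈ range (n + 1), C (a k) * X ^ k * (1 - X) ^ (n - k)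

theorem scaledBernsteinSum_succ (n : ℕ) (a : ℕ → R) :
    scaledBernsteinSum (n + 1) a =
      C (a 0) * (1 - X) ^ (n + 1) + X * scaledBernsteinSum n (fun k => a (k + 1)) := by
  rw [scaledBernsteinSum, sum_range_succ', add_comm, scaledBernsteinSum, mul_sum]
  congr 1
  · simp
  · refine sum_congr rfl fun k _ => ?_
    rw [Nat.add_sub_add_right]
    ring

theorem scaledBernsteinSum_sub (n : ℕ) (a b : ℕ → R) :
    scaledBernsteinSum n (a - b) = scaledBernsteinSum n a - scaledBernsteinSum n b := by
  simp only [scaledBernsteinSum, ← sum_sub_distrib, Pi.sub_apply, map_sub, sub_mul]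

theorem sum_C_mul_scaledBernsteinSum {ι : Type*} (s : Finset ι) (w : ι → R) (n : ℕ)
    (a : ι → ℕ → R) :
    ∑ j ∈ s, C (w j) * scaledBernsteinSum n (a j) =
      scaledBernsteinSum n (fun k => ∑ j ∈ s, w j * a j k) := by
  simp only [scaledBernsteinSum, mul_sum, map_sum, sum_mul, map_mul]
  rw [sum_comm]
  simp only [mul_assoc]

theorem eq_zero_of_scaledBernsteinSum_eq_zero {n : ℕ} {a : ℕ → R}
    (h : scaledBernsteinSum n a = 0) {k : ℕ} (hk : k ≤ n) : a k = 0 := by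
  induction n generalizing a k with
  | zero =>
    simpa [scaledBernsteinSum, Nat.le_zero.mp hk] using h
  | succ n ih =>
    rw [scaledBernsteinSum_succ] at h
    have h0 : a 0 = 0 := by simpa using congrArg (eval 0) h
    rw [h0, map_zero, zero_mul, zero_add] at h
    have hs := isRegular_X.left (h.trans (mul_zero X).symm)
    rcases k with _ | k
    · exact h0
    · exact ih hs (by omega)

theorem scaledBernsteinSum_inj {n : ℕ} {a b : ℕ → R}
    (h : scaledBernsteinSum n a = scaledBernsteinSum n b) {k : ℕ} (hk : k ≤ n) : a k = b k :=
  sub_eq_zero.mp <| eq_zero_of_scaledBernsteinSum_eq_zero (a := a - b)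
    (by rw [scaledBernsteinSum_sub, h, sub_self]) hk

theorem natDegree_scaledBernsteinSum_le (n : ℕ) (a : ℕ → R) :
    (scaledBernsteinSum n a).natDegree ≤ n := by
  refine natDegree_sum_le_of_forall_le _ _ fun k hk => ?_
  have hk : k ≤ n := Nat.lt_succ_iff.mp (mem_range.mp hk)
  calc (C (a k) * X ^ k * (1 - X : R[X]) ^ (n - k)).natDegree
      ≤ (C (a k) * X ^ k).natDegree + ((1 - X : R[X]) ^ (n - k)).natDegree := natDegree_mul_le
    _ ≤ k + (n - k) * 1 := by
        gcongr
        · exact natDegree_C_mul_X_pow_le _ _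
        · exact natDegree_pow_le_of_le _ ((natDegree_sub_le _ _).trans (by simp [natDegree_X_le]))
    _ = n := by omega

end ScaledBernstein

section LagrangeNodes

variable {ι : Type*} [DecidableEq ι]

theorem Lagrange.basisDivisor_eq_C_mul_X_add_C_mul_one_sub_X {F : Type*} [Field F] (x y : F) :
    Lagrange.basisDivisor x y = C ((1 - y) / (x - y)) * X + C (-y / (x - y)) * (1 - X) := by
  simp only [Lagrange.basisDivisor, div_eq_mul_inv, map_mul, map_neg, map_sub, map_one]
  ring

theorem Lagrange.basis_eq_scaledBernsteinSum {F : Type*} [Field F] (s : Finset ι) (v : ι → F)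
    (j : ι) :
    Lagrange.basis s v j = scaledBernsteinSum (s.erase j).card
      (mixedProdCoeff (s.erase j) (fun l => (1 - v l) / (v j - v l))
        (fun l => -v l / (v j - v l))) := by
  simp only [Lagrange.basis, Lagrange.basisDivisor_eq_C_mul_X_add_C_mul_one_sub_X,
    prod_mul_add_mul_eq_sum, scaledBernsteinSum, map_mixedProdCoeff]
  rfl

noncomputable def bernsteinLagrangeConst (s : Finset ι) (v : ι → ℝ) : ℝ :=
  ∑ j ∈ s, ∏ l ∈ s.erase j, max |1 - v l| |v l| / |v j - v l|

theorem abs_le_bernsteinLagrangeConst_mul {n : ℕ} {s : Finset ι} {v : ι → ℝ}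
    (hs : s.card = n + 1) (hv : Set.InjOn v s) (hvI : ∀ j ∈ s, v j ∈ Set.Icc (0 : ℝ) 1)
    {b : ℕ → ℝ} {M : ℝ}
    (hM : ∀ t ∈ Set.Icc (0 : ℝ) 1, |∑ k ∈ range (n + 1), b k * Z n k t| ≤ M)
    {k : ℕ} (hk : k ≤ n) :
    |b k| ≤ bernsteinLagrangeConst s v * M := by
  set P := scaledBernsteinSum n fun k => b k * n.choose k
  set γ : ι → ℕ → ℝ := fun j => mixedProdCoeff (s.erase j) (fun l => (1 - v l) / (v j - v l))
    (fun l => -v l / (v j - v l))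
  have hPeval : ∀ t, P.eval t = ∑ k ∈ range (n + 1), b k * Z n k t := fun t => by
    simp only [P, scaledBernsteinSum, eval_finsetSum, eval_mul, eval_C, eval_pow, eval_sub,
      eval_one, eval_X, Z]
    exact sum_congr rfl fun _ _ => by ring
  have hPdeg : P.degree < s.card := by
    rw [hs]
    exact (degree_le_of_natDegree_le (natDegree_scaledBernsteinSum_le n _)).trans_lt
      (by exact_mod_cast n.lt_succ_self)
  have hinterp : P = scaledBernsteinSum n fun k => ∑ j ∈ s, P.eval (v j) * γ j k := by
    rw [← sum_C_mul_scaledBernsteinSum]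
    conv_lhs => rw [Lagrange.eq_interpolate hv hPdeg, Lagrange.interpolate_apply]
    refine sum_congr rfl fun j hj => ?_
    rw [Lagrange.basis_eq_scaledBernsteinSum, card_erase_of_mem hj, hs, Nat.add_sub_cancel]
  set w : ι → ℝ := fun j => ∏ l ∈ s.erase j, max |1 - v l| |v l| / |v j - v l|
  have hγ : ∀ j ∈ s, |γ j k| ≤ n.choose k * w j := by
    intro j hj
    refine (abs_mixedProdCoeff_le _ _ _ k).trans_eq ?_
    rw [card_erase_of_mem hj, hs, Nat.add_sub_cancel]
    congr 1
    refine prod_congr rfl fun l _ => ?_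
    rw [abs_div, abs_div, abs_neg, max_div_div_right (abs_nonneg _)]
  have hM0 : 0 ≤ M := (abs_nonneg _).trans (hM 0 (by simp))
  have hchoose : (0 : ℝ) < n.choose k := by exact_mod_cast Nat.choose_pos hk
  refine le_of_mul_le_mul_right ?_ hchoose
  calc |b k| * n.choose k = |∑ j ∈ s, P.eval (v j) * γ j k| := by
        rw [← scaledBernsteinSum_inj hinterp hk, abs_mul, abs_of_pos hchoose]
    _ ≤ ∑ j ∈ s, M * (n.choose k * w j) := by
        refine (abs_sum_le_sum_abs _ _).trans (sum_le_sum fun j hj => ?_)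
        rw [abs_mul, hPeval]
        exact mul_le_mul (hM _ (hvI j hj)) (hγ j hj) (abs_nonneg _) hM0
    _ = bernsteinLagrangeConst s v * M * n.choose k := by
        rw [bernsteinLagrangeConst, sum_mul, sum_mul]
        exact sum_congr rfl fun _ _ => by ring

end LagrangeNodes

theorem xiB_eq_bernsteinLagrangeConst (n : ℕ) :
    xiB n = bernsteinLagrangeConst (range (n + 1)) (fun j : ℕ => (j : ℝ) / n) := by
  refine sum_congr rfl fun j hj => prod_congr rfl fun l hl => ?_
  have hn : (n : ℝ) ≠ 0 := by
    obtain ⟨hlj, hl⟩ := mem_erase.mp hl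
    have := mem_range.mp hj
    have := mem_range.mp hl
    exact_mod_cast (by omega : n ≠ 0)
  rw [one_sub_div hn, div_sub_div_same, abs_div, abs_div, abs_div,
    max_div_div_right (abs_nonneg _), div_div_div_cancel_right₀ (abs_ne_zero.mpr hn)]

theorem abs_le_xiB_mul {n : ℕ} {b : ℕ → ℝ} {M : ℝ}
    (hM : ∀ t ∈ Set.Icc (0 : ℝ) 1, |∑ k ∈ range (n + 1), b k * Z n k t| ≤ M)
    {k : ℕ} (hk : k ≤ n) : |b k| ≤ xiB n * M := by
  have hinj : Set.InjOn (fun j : ℕ => (j : ℝ) / n) (range (n + 1)) := by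
    intro j₁ hj₁ j₂ hj₂ hj
    rcases Nat.eq_zero_or_pos n with rfl | hn
    · simp_all
    · exact_mod_cast (div_left_inj' (by positivity : (n : ℝ) ≠ 0)).mp hj
  have hnodes : ∀ j ∈ range (n + 1), (j : ℝ) / n ∈ Set.Icc (0 : ℝ) 1 := fun j hj =>
    ⟨by positivity, div_le_one_of_le₀ (by exact_mod_cast Nat.lt_succ_iff.mp (mem_range.mp hj))
      n.cast_nonneg⟩
  rw [xiB_eq_bernsteinLagrangeConst]
  exact abs_le_bernsteinLagrangeConst_mul (card_range _) hinj hnodes hM hk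

theorem abs_le_xiB_mul_xiB_mul {m n : ℕ} {c : ℕ → ℕ → ℝ} {M : ℝ}
    (hM : ∀ u ∈ Set.Icc (0 : ℝ) 1, ∀ v ∈ Set.Icc (0 : ℝ) 1,
      |∑ i ∈ range (m + 1), ∑ j ∈ range (n + 1), Z m i u * Z n j v * c i j| ≤ M)
    {i j : ℕ} (hi : i ≤ m) (hj : j ≤ n) : |c i j| ≤ xiB m * xiB n * M := by
  have hrow : ∀ v ∈ Set.Icc (0 : ℝ) 1, |∑ j ∈ range (n + 1), c i j * Z n j v| ≤ xiB m * M :=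
    fun v hv => abs_le_xiB_mul (b := fun i => ∑ j ∈ range (n + 1), c i j * Z n j v)
      (fun u hu => by
        convert hM u hu v hv using 2
        exact sum_congr rfl fun i _ => by rw [sum_mul]; exact sum_congr rfl fun j _ => by ring)
      hi
  calc |c i j| ≤ xiB n * (xiB m * M) := abs_le_xiB_mul hrow hj
    _ = xiB m * xiB n * M := by ring

@[fun_prop]
theorem continuous_Z (n k : ℕ) : Continuous (Z n k) := by
  unfold Z
  fun_prop

/-- for `f(u,v) = ∑_{i=0}^m ∑_{j=0}^n c i j • Z_{i,m}(u) Z_{j,n}(v)` with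
`c i j ∈ ℝ²` (sup norm), every point `y` of the convex hull `P₁` of the coefficients
satisfies `‖y‖ ≤ ξ_B(m) ξ_B(n) * max_{0 ≤ u,v ≤ 1} ‖f(u,v)‖`. -/
theorem stmt_6 (m n : ℕ) (c : ℕ → ℕ → Fin 2 → ℝ) :
    ∀ y ∈ convexHull ℝ {x : Fin 2 → ℝ | ∃ i ≤ m, ∃ j ≤ n, x = c i j},
      ‖y‖ ≤ xiB m * xiB n *
        ⨆ uv : Set.Icc (0 : ℝ) 1 × Set.Icc (0 : ℝ) 1,
          ‖∑ i ∈ Finset.range (m + 1), ∑ j ∈ Finset.range (n + 1),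
            (Z m i (uv.1 : ℝ) * Z n j (uv.2 : ℝ)) • c i j‖ := by
  intro y hy
  set f := fun uv : Set.Icc (0 : ℝ) 1 × Set.Icc (0 : ℝ) 1 =>
    ∑ i ∈ Finset.range (m + 1), ∑ j ∈ Finset.range (n + 1),
      (Z m i (uv.1 : ℝ) * Z n j (uv.2 : ℝ)) • c i j
  have hbdd : BddAbove (Set.range fun uv => ‖f uv‖) :=
    (isCompact_range (by fun_prop)).bddAbove
  have hcoeff : ∀ i ≤ m, ∀ j ≤ n, ∀ d, |c i j d| ≤ xiB m * xiB n * ⨆ uv, ‖f uv‖ :=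
    fun i hi j hj d => abs_le_xiB_mul_xiB_mul (c := fun i j => c i j d) (fun u hu v hv => by
      calc _ = ‖f (⟨u, hu⟩, ⟨v, hv⟩) d‖ := by simp [f, Finset.sum_apply]
        _ ≤ ⨆ uv, ‖f uv‖ := (norm_le_pi_norm _ d).trans (le_ciSup hbdd _)) hi hj
  have hsub : {x : Fin 2 → ℝ | ∃ i ≤ m, ∃ j ≤ n, x = c i j} ⊆
      Metric.closedBall 0 (xiB m * xiB n * ⨆ uv, ‖f uv‖) := by
    rintro _ ⟨i, hi, j, hj, rfl⟩
    rw [mem_closedBall_zero_iff, pi_norm_le_iff_of_nonempty]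
    exact fun d => (Real.norm_eq_abs _).trans_le (hcoeff i hi j hj d)
  exact mem_closedBall_zero_iff.mp (convexHull_min hsub (convex_closedBall _ _) hy)
end

section
/- Let f(u,v) = Σ_{i=0}^{m} Σ_{j=0}^{n} c_{ij} u^i v^j with coefficients c_{ij} ∈ ℝ², and let P₂ = { c_{00} + Σ_{(i,j): i+j > 0} s_{ij} c_{ij} : −1 ≤ s_{ij} ≤ 1 }. Then for every y ∈ P₂, ‖y‖ ≤ ((m+1)(n+1)(3^{m+1} − 1)(3^{n+1} − 1)/2) · max_{−1 ≤ u,v ≤ 1} ‖f(u,v)‖. -/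
/-!
Write a real polynomial `p` of degree `< N` with `|p| ≤ M` on `[-1, 1]` in the Chebyshev basis,
`p = ∑ j < N, b j • T j`. Substituting `x = cos θ` turns the orthogonality of the `T j` into
that of `cos (j θ)` on `[0, π]`, so `|b j| ≤ 2 M`; the recursion
`T (j + 2) = 2 X T (j + 1) - T j` bounds the absolute sum of the coefficients of `T j` by `3 ^ j`.
Hence `|coeff p i| ≤ w i * M` with weights `∑ i < N, w i ≤ 2 ∑ j < N, 3 ^ j = 3 ^ N - 1`.
Keeping the bound coefficientwise lets it be applied first in `u` and then, with `M` replaced by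
`w i * M`, in `v`, giving `∑ |c i j κ| ≤ (3 ^ (m + 1) - 1) (3 ^ (n + 1) - 1) M` in each
coordinate `κ`; this dominates every point of `P₂`. The extra factor `(m + 1) (n + 1) / 2` is at
least `1` unless `m = n = 0`, where `P₂ = {c 0 0} = {f 0 0}`.
-/

open Finset Polynomial Real MeasureTheory
open Polynomial.Chebyshev (T measureT)

section

variable {R : Type*} [CommRing R] [LinearOrder R] [IsStrictOrderedRing R]

theorem Polynomial.sum_range_abs_coeff_X_mul_le (q : R[X]) (N : ℕ) :
    ∑ i ∈ range N, |(X * q).coeff i| ≤ ∑ i ∈ range N, |q.coeff i| := by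
  cases N with
  | zero => simp
  | succ N =>
    rw [sum_range_succ', sum_range_succ]
    simp [coeff_X_mul, abs_nonneg (q.coeff N)]

theorem Polynomial.Chebyshev.sum_range_abs_coeff_T_le (N j : ℕ) :
    ∑ i ∈ range N, |(T R j).coeff i| ≤ 3 ^ j := by
  induction j using Nat.twoStepInduction with
  | zero =>
    simp only [Nat.cast_zero, T_zero, coeff_one, apply_ite, abs_one, abs_zero, sum_ite_eq',
      mem_range, pow_zero]
    split_ifs <;> simp
  | one =>
    simp only [Nat.cast_one, T_one, coeff_X, apply_ite, abs_one, abs_zero, sum_ite_eq, mem_range,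
      pow_one]
    split_ifs <;> simp
  | more j ih₀ ih₁ =>
    have hT : T R ↑(j + 2) = 2 * (X * T R ↑(j + 1)) - T R j := by
      push_cast; rw [T_add_two, mul_assoc]
    calc ∑ i ∈ range N, |(T R ↑(j + 2)).coeff i|
        ≤ ∑ i ∈ range N, (2 * |(X * T R ↑(j + 1)).coeff i| + |(T R j).coeff i|) := by
          gcongr with i
          rw [hT, coeff_sub, coeff_ofNat_mul]
          exact (abs_sub _ _).trans (by rw [abs_mul, abs_two])
      _ ≤ 2 * 3 ^ (j + 1) + 3 ^ j := by
          rw [sum_add_distrib, ← mul_sum]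
          have := (sum_range_abs_coeff_X_mul_le (T R ↑(j + 1)) N).trans ih₁
          linarith
      _ ≤ 3 ^ (j + 2) := by ring_nf; linarith [pow_nonneg (zero_le_three (α := R)) j]

end

theorem Polynomial.Chebyshev.exists_sum_smul_T_eq {R : Type*} [Field R] [NeZero (2 : R)]
    {p : R[X]} {N : ℕ} (hp : p.degree < N) :
    ∃ b : ℕ → R, ∑ j ∈ range N, b j • T R j = p := by
  let S : Sequence R := ⟨fun j ↦ T R j, fun j ↦ by simp⟩
  have hspan := S.span_degreeLT (m := N) fun j _ ↦ by simp [S, two_ne_zero]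
  rw [← coe_range, Submodule.ext_iff] at hspan
  exact (Submodule.mem_span_image_finset_iff_exists_fun' (R := R)).mp
    ((hspan p).mpr (mem_degreeLT.mpr hp))

theorem Polynomial.Chebyshev.abs_integral_measureT_le {f : ℝ → ℝ} {M : ℝ}
    (hf : ∀ x ∈ Set.Icc (-1) 1, |f x| ≤ M) : |∫ x, f x ∂measureT| ≤ M * π := by
  rw [integral_measureT_eq_integral_cos, ← Real.norm_eq_abs]
  simpa [abs_of_pos pi_pos] using
    intervalIntegral.norm_integral_le_of_norm_le_const (a := 0) (b := π) fun θ _ ↦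
      (hf (cos θ) ⟨neg_one_le_cos θ, cos_le_one θ⟩).trans_eq' (Real.norm_eq_abs _).symm

theorem Polynomial.Chebyshev.integral_sum_smul_T_mul_T_measureT (b : ℕ → ℝ) {N k : ℕ}
    (hk : k < N) :
    ∫ x, (∑ j ∈ range N, b j • T ℝ j).eval x * (T ℝ k).eval x ∂measureT =
      b k * ∫ x, (T ℝ k).eval x * (T ℝ k).eval x ∂measureT := by
  simp_rw [eval_finsetSum, eval_smul, smul_eq_mul, sum_mul, mul_assoc]
  rw [integral_finsetSum _ fun j _ ↦ integrable_measureT (by fun_prop), sum_eq_single k]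
  · exact integral_const_mul _ _
  · intro j _ hjk
    rw [integral_const_mul, integral_eval_T_real_mul_eval_T_real_measureT_of_ne hjk, mul_zero]
  · simp [hk]

theorem Polynomial.Chebyshev.abs_le_two_mul_of_abs_eval_sum_smul_T_le {b : ℕ → ℝ} {N k : ℕ}
    {M : ℝ} (hk : k < N)
    (hM : ∀ x ∈ Set.Icc (-1) 1, |(∑ j ∈ range N, b j • T ℝ j).eval x| ≤ M) : |b k| ≤ 2 * M := by
  have hM0 : 0 ≤ M := (abs_nonneg _).trans (hM 0 (by norm_num))
  have := abs_integral_measureT_le fun x hx ↦ (abs_mul _ _).trans_le <| (mul_le_mul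
    (hM x hx) (abs_eval_T_real_le_one k (abs_le.mpr hx)) (abs_nonneg _) hM0).trans_eq (mul_one M)
  rw [integral_sum_smul_T_mul_T_measureT b hk, abs_mul] at this
  rcases eq_or_ne k 0 with rfl | hk0
  · rw [Nat.cast_zero, integral_eval_T_real_mul_self_measureT_zero, abs_of_pos pi_pos] at this
    nlinarith [pi_pos]
  · rw [integral_T_real_mul_self_measureT_of_ne_zero hk0, abs_of_pos pi_div_two_pos] at this
    nlinarith [pi_pos]

noncomputable def chebWeight (N i : ℕ) : ℝ := 2 * ∑ j ∈ range N, |(T ℝ j).coeff i|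

theorem chebWeight_nonneg (N i : ℕ) : 0 ≤ chebWeight N i := by
  unfold chebWeight; positivity

theorem sum_range_chebWeight_le (N : ℕ) : ∑ i ∈ range N, chebWeight N i ≤ 3 ^ N - 1 := by
  calc ∑ i ∈ range N, chebWeight N i = 2 * ∑ j ∈ range N, ∑ i ∈ range N, |(T ℝ j).coeff i| := by
        simp only [chebWeight, ← mul_sum]; rw [sum_comm]
    _ ≤ 2 * ∑ j ∈ range N, (3 : ℝ) ^ j := by
        gcongr with j; exact Chebyshev.sum_range_abs_coeff_T_le N j
    _ = 3 ^ N - 1 := by rw [geom_sum_eq (by norm_num)]; ring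

theorem abs_coeff_le_chebWeight_mul {p : ℝ[X]} {N : ℕ} {M : ℝ} (hp : p.degree < N)
    (hM : ∀ x ∈ Set.Icc (-1) 1, |p.eval x| ≤ M) (i : ℕ) : |p.coeff i| ≤ chebWeight N i * M := by
  obtain ⟨b, rfl⟩ := Chebyshev.exists_sum_smul_T_eq hp
  simp only [finsetSum_coeff, coeff_smul, smul_eq_mul]
  calc |∑ j ∈ range N, b j * (T ℝ j).coeff i| ≤ ∑ j ∈ range N, |b j| * |(T ℝ j).coeff i| := by
        simpa only [abs_mul] using abs_sum_le_sum_abs (fun j ↦ b j * (T ℝ j).coeff i) (range N)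
    _ ≤ ∑ j ∈ range N, 2 * M * |(T ℝ j).coeff i| := by
        gcongr with j hj
        exact Chebyshev.abs_le_two_mul_of_abs_eval_sum_smul_T_le (mem_range.mp hj) hM
    _ = chebWeight N i * M := by
        simp only [chebWeight, mul_sum, sum_mul]; exact sum_congr rfl fun _ _ ↦ by ring

theorem abs_le_chebWeight_mul_of_forall_abs_sum_le (a : ℕ → ℝ) {N : ℕ} {M : ℝ}
    (hM : ∀ x ∈ Set.Icc (-1) 1, |∑ i ∈ range N, a i * x ^ i| ≤ M) {i : ℕ} (hi : i < N) :
    |a i| ≤ chebWeight N i * M := by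
  have hdeg : (∑ i ∈ range N, C (a i) * X ^ i).degree < (N : WithBot ℕ) := mem_degreeLT.mp <|
    (degreeLT ℝ N).sum_mem fun k hk ↦ mem_degreeLT.mpr <|
      (degree_C_mul_X_pow_le _ _).trans_lt (by exact_mod_cast mem_range.mp hk)
  have := abs_coeff_le_chebWeight_mul hdeg (by simpa [eval_finsetSum] using hM) i
  simpa [finsetSum_coeff, coeff_C_mul_X_pow, hi] using this

theorem sum_sum_abs_le_of_forall_abs_sum_sum_le (c : ℕ → ℕ → ℝ) {N₁ N₂ : ℕ} {M : ℝ}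
    (hM : ∀ u ∈ Set.Icc (-1) 1, ∀ v ∈ Set.Icc (-1) 1,
      |∑ i ∈ range N₁, ∑ j ∈ range N₂, u ^ i * v ^ j * c i j| ≤ M) :
    ∑ i ∈ range N₁, ∑ j ∈ range N₂, |c i j| ≤ (3 ^ N₁ - 1) * (3 ^ N₂ - 1) * M := by
  have hM0 : 0 ≤ M := (abs_nonneg _).trans (hM 0 (by norm_num) 0 (by norm_num))
  have hrow : ∀ i < N₁, ∀ v ∈ Set.Icc (-1 : ℝ) 1,
      |∑ j ∈ range N₂, c i j * v ^ j| ≤ chebWeight N₁ i * M := by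
    intro i hi v hv
    refine abs_le_chebWeight_mul_of_forall_abs_sum_le (fun i ↦ ∑ j ∈ range N₂, c i j * v ^ j)
      (fun u hu ↦ ?_) hi
    convert hM u hu v hv using 3 with i
    rw [sum_mul]
    exact sum_congr rfl fun j _ ↦ by ring
  calc ∑ i ∈ range N₁, ∑ j ∈ range N₂, |c i j|
      ≤ ∑ i ∈ range N₁, ∑ j ∈ range N₂, chebWeight N₁ i * chebWeight N₂ j * M := by
        gcongr with i hi j hj
        rw [mul_right_comm, mul_comm]
        exact abs_le_chebWeight_mul_of_forall_abs_sum_le (c i) (hrow i (mem_range.mp hi))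
          (mem_range.mp hj)
    _ = (∑ i ∈ range N₁, chebWeight N₁ i) * (∑ j ∈ range N₂, chebWeight N₂ j) * M := by
        rw [sum_mul_sum, sum_mul]; simp_rw [sum_mul]
    _ ≤ (3 ^ N₁ - 1) * (3 ^ N₂ - 1) * M := by
        have := sum_range_chebWeight_le N₁
        gcongr
        · exact sum_nonneg fun j _ ↦ chebWeight_nonneg N₂ j
        · linarith [sum_nonneg fun i (_ : i ∈ range N₁) ↦ chebWeight_nonneg N₁ i]
        · exact sum_range_chebWeight_le N₂

theorem norm_add_sum_filter_smul_le {E : Type*} [SeminormedAddCommGroup E] [NormedSpace ℝ E]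
    (c : ℕ → ℕ → E) (s : ℕ → ℕ → ℝ) (hs : ∀ i j, |s i j| ≤ 1) (m n : ℕ) :
    ‖c 0 0 + ∑ p ∈ (range (m + 1) ×ˢ range (n + 1)).filter (fun p ↦ 0 < p.1 + p.2),
        s p.1 p.2 • c p.1 p.2‖ ≤ ∑ i ∈ range (m + 1), ∑ j ∈ range (n + 1), ‖c i j‖ := by
  have hfilter : (range (m + 1) ×ˢ range (n + 1)).filter (fun p ↦ 0 < p.1 + p.2) =
      (range (m + 1) ×ˢ range (n + 1)).erase (0, 0) := by
    ext ⟨i, j⟩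
    simp only [mem_filter, mem_erase, mem_product, mem_range, ne_eq, Prod.mk.injEq]
    omega
  have h00 : ((0, 0) : ℕ × ℕ) ∈ range (m + 1) ×ˢ range (n + 1) := by simp
  rw [hfilter, ← sum_product' (f := fun i j ↦ ‖c i j‖), ← add_sum_erase _ _ h00]
  refine norm_add_le_of_le le_rfl ((norm_sum_le _ _).trans (sum_le_sum fun p _ ↦ ?_))
  rw [norm_smul, Real.norm_eq_abs]
  exact mul_le_of_le_one_left (norm_nonneg _) (hs p.1 p.2)

theorem three_pow_sub_one_mul_three_pow_sub_one_le {m n : ℕ} (hmn : 1 ≤ m + n) :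
    ((3 : ℝ) ^ (m + 1) - 1) * (3 ^ (n + 1) - 1) ≤
      (m + 1 : ℝ) * (n + 1) * (3 ^ (m + 1) - 1) * (3 ^ (n + 1) - 1) / 2 := by
  have ha : (0 : ℝ) ≤ 3 ^ (m + 1) - 1 := sub_nonneg.mpr (one_le_pow₀ (by norm_num))
  have hb : (0 : ℝ) ≤ 3 ^ (n + 1) - 1 := sub_nonneg.mpr (one_le_pow₀ (by norm_num))
  have h2 : (2 : ℝ) ≤ (m + 1) * (n + 1) := by
    have : (1 : ℝ) ≤ m + n := by exact_mod_cast hmn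
    nlinarith [(by positivity : (0 : ℝ) ≤ m * n)]
  nlinarith [mul_le_mul_of_nonneg_right h2 (mul_nonneg ha hb)]

/-- for `f(u,v) = ∑_{i=0}^m ∑_{j=0}^n c i j • u^i v^j` with `c i j ∈ ℝ²`
(sup norm), every point of the bounding polygon
`P₂ = { c 0 0 + ∑_{i+j>0} s i j • c i j : -1 ≤ s i j ≤ 1 }` satisfies
`‖y‖ ≤ ((m+1)(n+1)(3^{m+1}-1)(3^{n+1}-1)/2) * max_{-1 ≤ u,v ≤ 1} ‖f(u,v)‖`. -/
theorem stmt_7 (m n : ℕ) (c : ℕ → ℕ → Fin 2 → ℝ) :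
    ∀ y ∈ {x : Fin 2 → ℝ | ∃ s : ℕ → ℕ → ℝ, (∀ i j, -1 ≤ s i j ∧ s i j ≤ 1) ∧
        x = c 0 0 + ∑ p ∈ (Finset.range (m + 1) ×ˢ Finset.range (n + 1)).filter
          (fun p => 0 < p.1 + p.2), s p.1 p.2 • c p.1 p.2},
      ‖y‖ ≤ ((m + 1 : ℝ) * (n + 1) * (3 ^ (m + 1) - 1) * (3 ^ (n + 1) - 1) / 2) *
        ⨆ uv : Set.Icc (-1 : ℝ) 1 × Set.Icc (-1 : ℝ) 1,
          ‖∑ i ∈ Finset.range (m + 1), ∑ j ∈ Finset.range (n + 1),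
            ((uv.1 : ℝ) ^ i * (uv.2 : ℝ) ^ j) • c i j‖ := by
  rintro y ⟨s, hs, rfl⟩
  set M := ⨆ uv : Set.Icc (-1 : ℝ) 1 × Set.Icc (-1 : ℝ) 1, ‖∑ i ∈ range (m + 1),
    ∑ j ∈ range (n + 1), ((uv.1 : ℝ) ^ i * (uv.2 : ℝ) ^ j) • c i j‖
  have hbdd : BddAbove (Set.range fun uv : Set.Icc (-1 : ℝ) 1 × Set.Icc (-1 : ℝ) 1 ↦
      ‖∑ i ∈ range (m + 1), ∑ j ∈ range (n + 1), ((uv.1 : ℝ) ^ i * (uv.2 : ℝ) ^ j) • c i j‖) :=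
    (isCompact_range (by fun_prop)).bddAbove
  have hf : ∀ u ∈ Set.Icc (-1 : ℝ) 1, ∀ v ∈ Set.Icc (-1 : ℝ) 1,
      ‖∑ i ∈ range (m + 1), ∑ j ∈ range (n + 1), (u ^ i * v ^ j) • c i j‖ ≤ M :=
    fun u hu v hv ↦ le_ciSup hbdd ⟨⟨u, hu⟩, ⟨v, hv⟩⟩
  have hM0 : 0 ≤ M := (norm_nonneg _).trans (hf 0 (by norm_num) 0 (by norm_num))
  by_cases hmn : m = 0 ∧ n = 0
  · obtain ⟨rfl, rfl⟩ := hmn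
    have hc : ‖c 0 0‖ ≤ M := by simpa using hf 0 (by norm_num) 0 (by norm_num)
    norm_num [filter_singleton]
    linarith
  refine (pi_norm_le_iff_of_nonempty _).mpr fun κ ↦ ?_
  calc ‖(c 0 0 + ∑ p ∈ (range (m + 1) ×ˢ range (n + 1)).filter (fun p ↦ 0 < p.1 + p.2),
        s p.1 p.2 • c p.1 p.2) κ‖ ≤ ∑ i ∈ range (m + 1), ∑ j ∈ range (n + 1), |c i j κ| := by
        simpa [Finset.sum_apply] using norm_add_sum_filter_smul_le (fun i j ↦ c i j κ) s
          (fun i j ↦ abs_le.mpr (hs i j)) m n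
    _ ≤ (3 ^ (m + 1) - 1) * (3 ^ (n + 1) - 1) * M :=
        sum_sum_abs_le_of_forall_abs_sum_sum_le (fun i j ↦ c i j κ) fun u hu v hv ↦ by
          simpa [Finset.sum_apply] using (norm_le_pi_norm _ κ).trans (hf u hu v hv)
    _ ≤ _ := mul_le_mul_of_nonneg_right
        (three_pow_sub_one_mul_three_pow_sub_one_le (by omega)) hM0
end
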